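/- arXiv:2507.09729 — 4 statements merged into one kernel-verified Lean document; each statement's English description precedes it below -/
import Mathlib

section
/- Let X be a finite nonempty multiset of real numbers with even cardinality, let η ∈ ℝ be such that X is partitioned into L = {x ∈ X : x ≤ η} and R = {x ∈ X : x ≥ η} with |L| = |R| = |X|/2, and let μ̄ = (1/|X|) ∑_{x∈X} x. Then there exists a sub-multiset S ⊆ X such that (1) S ⊆ L or S ⊆ R, (2) for every s ∈ S, (s − η)² ≥ (1/9)(s − μ̄)², and (3) ∑_{s∈S} (s − μ̄)² ≥ (1/32) ∑_{x∈X} (x − μ̄)². -/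
/-!
Call a point `x` far if `|x - η| ≥ |x - μ| / 3`, where `μ` is the mean, and let `n = |L| = |R|`.
Points that are not far have `(x - μ)² ≤ 9/4 (η - μ)²`, so they carry at most
`9/2 · n (η - μ)²` of the total squared deviation. Since `L.sum + R.sum = 2nμ`, the side of `η`
containing `μ` has its mean at distance at least `|η - μ|` from `μ`, and a tangent-line bound turns
this into squared deviation at least `n (η - μ)²` carried by its far points. So the far points of
one side carry at least `2/13` of the total.
-/

noncomputable def thirdFar (η μ : ℝ) (P : Multiset ℝ) : Multiset ℝ :=
  P.filter fun x => (x - η) ^ 2 ≥ 1 / 9 * (x - μ) ^ 2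

def sqDev (μ : ℝ) (P : Multiset ℝ) : ℝ :=
  (P.map fun x => (x - μ) ^ 2).sum

/-- The negated condition factors as `(3η - μ - 2x)(4x - 3η - μ) > 0`, which forces `x - μ` to lie
strictly between `3/4 (η - μ)` and `3/2 (η - μ)`. -/
lemma sq_sub_le_and_mul_nonneg_of_not_far {x η μ : ℝ} (h : ¬ (x - η) ^ 2 ≥ 1 / 9 * (x - μ) ^ 2) :
    (x - μ) ^ 2 ≤ 9 / 4 * (η - μ) ^ 2 ∧ 0 ≤ (x - μ) * (η - μ) := by
  have hprod : 0 < (3 * η - μ - 2 * x) * (4 * x - 3 * η - μ) := by nlinarith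
  rcases lt_or_ge 0 (3 * η - μ - 2 * x) with hpos | hneg
  · have h4 : 0 < 4 * x - 3 * η - μ := pos_of_mul_pos_right hprod hpos.le
    constructor <;> nlinarith
  · have h4 : 4 * x - 3 * η - μ < 0 := by nlinarith
    constructor <;> nlinarith

section SqDev

variable (η μ : ℝ) (P Q : Multiset ℝ)

lemma sqDev_add : sqDev μ (P + Q) = sqDev μ P + sqDev μ Q := by
  simp only [sqDev, Multiset.map_add, Multiset.sum_add]

lemma sqDev_nonneg : 0 ≤ sqDev μ P :=
  Multiset.sum_nonneg fun _ hy => by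
    obtain ⟨x, -, rfl⟩ := Multiset.mem_map.mp hy
    positivity

lemma sqDev_sub_sqDev_thirdFar_le :
    sqDev μ P - sqDev μ (thirdFar η μ P) ≤ Multiset.card P * (9 / 4 * (η - μ) ^ 2) := by
  set N := P.filter fun x => ¬ (x - η) ^ 2 ≥ 1 / 9 * (x - μ) ^ 2
  have hsplit : sqDev μ P = sqDev μ (thirdFar η μ P) + sqDev μ N := by
    rw [thirdFar, ← sqDev_add, Multiset.filter_add_not]
  have hN : sqDev μ N ≤ Multiset.card N * (9 / 4 * (η - μ) ^ 2) := by
    have := (N.map fun x => (x - μ) ^ 2).sum_le_card_nsmul (9 / 4 * (η - μ) ^ 2) <| by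
      simp only [Multiset.mem_map]
      rintro _ ⟨x, hx, rfl⟩
      exact (sq_sub_le_and_mul_nonneg_of_not_far (Multiset.mem_filter.mp hx).2).1
    rwa [Multiset.card_map, nsmul_eq_mul] at this
  have hcard : (Multiset.card N : ℝ) ≤ Multiset.card P := by
    exact_mod_cast Multiset.card_le_card (Multiset.filter_le _ P)
  nlinarith [sq_nonneg (η - μ)]

/-- Tangent-line bound `(x - μ)² ≥ -2 (η - μ)(x - μ) - (η - μ)²`; on the points dropped by
`thirdFar` the right-hand side is nonpositive. -/
lemma tangent_le_sqDev_thirdFar :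
    2 * (η - μ) * (Multiset.card P * μ - P.sum) - Multiset.card P * (η - μ) ^ 2 ≤
      sqDev μ (thirdFar η μ P) := by
  set N := P.filter fun x => ¬ (x - η) ^ 2 ≥ 1 / 9 * (x - μ) ^ 2
  let g : ℝ → ℝ := fun x => 2 * (η - μ) * (μ - x) - (η - μ) ^ 2
  have hg : (P.map g).sum =
      2 * (η - μ) * (Multiset.card P * μ - P.sum) - Multiset.card P * (η - μ) ^ 2 := by
    rw [Multiset.sum_map_sub, Multiset.sum_map_mul_left, Multiset.sum_map_sub, Multiset.map_const',
      Multiset.map_const', Multiset.sum_replicate, Multiset.sum_replicate, Multiset.map_id',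
      nsmul_eq_mul, nsmul_eq_mul]
  have hsplit : (P.map g).sum = ((thirdFar η μ P).map g).sum + (N.map g).sum := by
    rw [thirdFar, ← Multiset.sum_add, ← Multiset.map_add, Multiset.filter_add_not]
  have hgood : ((thirdFar η μ P).map g).sum ≤ sqDev μ (thirdFar η μ P) :=
    Multiset.sum_map_le_sum_map _ _ fun x _ => by nlinarith [sq_nonneg (x - μ + (η - μ))]
  have hbad : (N.map g).sum ≤ 0 := by
    refine (Multiset.sum_le_card_nsmul _ 0 fun _ hy => ?_).trans_eq (nsmul_zero _)
    obtain ⟨x, hx, rfl⟩ := Multiset.mem_map.mp hy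
    nlinarith [(sq_sub_le_and_mul_nonneg_of_not_far (Multiset.mem_filter.mp hx).2).2, sq_nonneg (η - μ)]
  linarith

end SqDev

lemma card_mul_sq_le_sqDev_thirdFar {L R : Multiset ℝ} {η μ : ℝ}
    (hL : ∀ x ∈ L, x ≤ η) (hR : ∀ x ∈ R, η ≤ x) (hcard : Multiset.card L = Multiset.card R)
    (hsum : L.sum + R.sum = 2 * Multiset.card L * μ) :
    Multiset.card L * (η - μ) ^ 2 ≤ sqDev μ (thirdFar η μ L) ∨
      Multiset.card L * (η - μ) ^ 2 ≤ sqDev μ (thirdFar η μ R) := by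
  have hLsum : L.sum ≤ Multiset.card L * η := by
    simpa only [nsmul_eq_mul] using L.sum_le_card_nsmul η hL
  have hRsum : Multiset.card L * η ≤ R.sum := by
    simpa only [nsmul_eq_mul, hcard] using R.card_nsmul_le_sum hR
  have hAL := tangent_le_sqDev_thirdFar η μ L
  have hAR := tangent_le_sqDev_thirdFar η μ R
  rw [← hcard] at hAR
  rcases le_total μ η with h | h
  · left
    nlinarith [mul_nonneg (sub_nonneg.2 h) (sub_nonneg.2 hRsum)]
  · right
    nlinarith [mul_nonneg (sub_nonneg.2 h) (sub_nonneg.2 hLsum)]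

lemma sqDev_thirdFar_ge_or {L R : Multiset ℝ} {η μ : ℝ}
    (hL : ∀ x ∈ L, x ≤ η) (hR : ∀ x ∈ R, η ≤ x) (hcard : Multiset.card L = Multiset.card R)
    (hsum : L.sum + R.sum = 2 * Multiset.card L * μ) :
    1 / 32 * sqDev μ (L + R) ≤ sqDev μ (thirdFar η μ L) ∨
      1 / 32 * sqDev μ (L + R) ≤ sqDev μ (thirdFar η μ R) := by
  have hdropL := sqDev_sub_sqDev_thirdFar_le η μ L
  have hdropR := sqDev_sub_sqDev_thirdFar_le η μ R
  rw [← hcard] at hdropR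
  have hV := sqDev_add μ L R
  have hV0 := sqDev_nonneg μ (L + R)
  by_contra! h
  rcases card_mul_sq_le_sqDev_thirdFar hL hR hcard hsum with hA | hA <;> linarith

theorem stmt0_general (X L R : Multiset ℝ) (η : ℝ)
    (hLR : X = L + R)
    (hL : ∀ x ∈ L, x ≤ η) (hR : ∀ x ∈ R, η ≤ x)
    (hcard : Multiset.card L = Multiset.card R) :
    ∃ S : Multiset ℝ,
      (S ≤ L ∨ S ≤ R) ∧
      (∀ s ∈ S, (s - η) ^ 2 ≥ (1 / 9) * (s - X.sum / (Multiset.card X : ℝ)) ^ 2) ∧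
      (S.map (fun s => (s - X.sum / (Multiset.card X : ℝ)) ^ 2)).sum ≥
        (1 / 32) * (X.map (fun x => (x - X.sum / (Multiset.card X : ℝ)) ^ 2)).sum := by
  set μ := X.sum / (Multiset.card X : ℝ)
  have hmean : μ * Multiset.card X = X.sum :=
    div_mul_cancel_of_imp fun h => by simp [Multiset.card_eq_zero.mp (Nat.cast_eq_zero.mp h)]
  have hsum : L.sum + R.sum = 2 * Multiset.card L * μ := by
    rw [hLR, Multiset.sum_add, Multiset.card_add, ← hcard] at hmean
    push_cast at hmean
    linarith
  have hfar (P : Multiset ℝ) : ∀ s ∈ thirdFar η μ P, (s - η) ^ 2 ≥ 1 / 9 * (s - μ) ^ 2 :=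
    fun _ hs => (Multiset.mem_filter.mp hs).2
  rw [hLR]
  rcases sqDev_thirdFar_ge_or hL hR hcard hsum with h | h
  · exact ⟨_, Or.inl (Multiset.filter_le _ L), hfar L, h⟩
  · exact ⟨_, Or.inr (Multiset.filter_le _ R), hfar R, h⟩

/-- Bisection lemma: from a bisection (L, R) of a finite nonempty multiset X of reals
by a separator η, one can extract a sub-multiset S contained in one side such that
every element of S is (up to factor 1/9 in the square) as far from η as from the
average μ̄, and S captures a 1/32 fraction of the total squared deviation. -/
theorem stmt0 (X L R : Multiset ℝ) (η : ℝ) (hX : X ≠ 0)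
    (heven : Even (Multiset.card X))
    (hLR : X = L + R)
    (hL : ∀ x ∈ L, x ≤ η) (hR : ∀ x ∈ R, η ≤ x)
    (hcard : Multiset.card L = Multiset.card R) :
    ∃ S : Multiset ℝ,
      (S ≤ L ∨ S ≤ R) ∧
      (∀ s ∈ S, (s - η) ^ 2 ≥ (1 / 9) * (s - X.sum / (Multiset.card X : ℝ)) ^ 2) ∧
      (S.map (fun s => (s - X.sum / (Multiset.card X : ℝ)) ^ 2)).sum ≥
        (1 / 32) * (X.map (fun x => (x - X.sum / (Multiset.card X : ℝ)) ^ 2)).sum :=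
  stmt0_general X L R η hLR hL hR hcard
end

section
/- Let X be a finite multiset of reals with |X| even, let μ̄ be its average, let L_{μ̄} = {x ∈ X : x < μ̄}, and d = ∑_{x ∈ L_{μ̄}} (μ̄ − x). Suppose η ∈ ℝ satisfies: the set L_η = {x ∈ X : x ≤ η} has exactly |X|/2 elements and η ≤ μ̄. Then η ≥ μ̄ − 2d/|X|. -/
/-!
Let `μ` be the mean and `L = {x ∈ X | x ≤ η}`, a multiset of `|X| / 2` elements. Every `x ∈ L`
lies at least `μ - η` below the mean, so `(|X| / 2) (μ - η) ≤ ∑_{x ∈ L} (μ - x)⁺ ≤ ∑_{x ∈ X} (μ - x)⁺ = d`.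
-/

namespace Multiset

lemma sum_map_le_sum_map_of_le {ι α : Type*} [AddCommMonoid α] [PartialOrder α]
    [IsOrderedAddMonoid α] {s t : Multiset ι} (f : ι → α) (hst : s ≤ t)
    (hf : ∀ i ∈ t, 0 ≤ f i) : (s.map f).sum ≤ (t.map f).sum := by
  obtain ⟨u, rfl⟩ := le_iff_exists_add.mp hst
  rw [map_add, sum_add]
  exact le_add_of_nonneg_right <| sum_nonneg fun _ hx ↦ by
    obtain ⟨i, hi, rfl⟩ := mem_map.mp hx
    exact hf i (mem_add.mpr (Or.inr hi))

variable {α : Type*} [AddCommGroup α] [LinearOrder α] [IsOrderedAddMonoid α]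

lemma sum_map_sub_filter_lt (s : Multiset α) (μ : α) :
    ((s.filter (· < μ)).map (μ - ·)).sum = (s.map fun x ↦ (μ - x)⁺).sum := by
  conv_rhs => rw [← filter_add_not (· < μ) s]
  rw [map_add, sum_add]
  have below : (s.filter (· < μ)).map (fun x ↦ (μ - x)⁺) = (s.filter (· < μ)).map (μ - ·) :=
    map_congr rfl fun x hx ↦ posPart_eq_self.mpr (sub_nonneg.mpr (mem_filter.mp hx).2.le)
  have above : ((s.filter (¬ · < μ)).map fun x ↦ (μ - x)⁺).sum = 0 :=
    sum_eq_zero fun _ hy ↦ by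
      obtain ⟨x, hx, rfl⟩ := mem_map.mp hy
      exact posPart_eq_zero.mpr (sub_nonpos.mpr (not_lt.mp (mem_filter.mp hx).2))
  rw [below, above, add_zero]

lemma card_filter_le_nsmul_sub_le (s : Multiset α) (μ η : α) :
    card (s.filter (· ≤ η)) • (μ - η) ≤ ((s.filter (· < μ)).map (μ - ·)).sum := by
  calc card (s.filter (· ≤ η)) • (μ - η)
      ≤ ((s.filter (· ≤ η)).map fun x ↦ (μ - x)⁺).sum := by
        rw [← card_map (fun x ↦ (μ - x)⁺)]
        refine card_nsmul_le_sum fun _ hy ↦ ?_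
        obtain ⟨x, hx, rfl⟩ := mem_map.mp hy
        exact (sub_le_sub_left (mem_filter.mp hx).2 μ).trans (le_posPart _)
    _ ≤ (s.map fun x ↦ (μ - x)⁺).sum :=
        sum_map_le_sum_map_of_le _ (filter_le _ _) fun _ _ ↦ posPart_nonneg _
    _ = ((s.filter (· < μ)).map (μ - ·)).sum := (sum_map_sub_filter_lt s μ).symm

end Multiset

theorem stmt1_general (X : Multiset ℝ) (η : ℝ) (hX : X ≠ 0)
    (heven : Even (Multiset.card X))
    (hcard : Multiset.card (X.filter (fun x => x ≤ η)) = Multiset.card X / 2) :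
    η ≥ X.sum / (Multiset.card X : ℝ) -
      2 * ((X.filter (fun x => x < X.sum / (Multiset.card X : ℝ))).map
            (fun x => X.sum / (Multiset.card X : ℝ) - x)).sum / (Multiset.card X : ℝ) := by
  set μ := X.sum / (Multiset.card X : ℝ)
  set d := ((X.filter (fun x => x < μ)).map (fun x => μ - x)).sum
  obtain ⟨k, hk⟩ := heven
  have hk_pos : (0 : ℝ) < k := by
    have := Multiset.card_pos.mpr hX
    exact_mod_cast (by omega : 0 < k)
  have hcard_real : (Multiset.card X : ℝ) = 2 * k := by rw [hk]; push_cast; ring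
  have key : (k : ℝ) * (μ - η) ≤ d := by
    have := Multiset.card_filter_le_nsmul_sub_le X μ η
    rwa [hcard, hk, show (k + k) / 2 = k by omega, nsmul_eq_mul] at this
  rw [hcard_real, ge_iff_le, sub_le_iff_le_add, mul_div_mul_left _ _ two_ne_zero,
    ← sub_le_iff_le_add', le_div_iff₀ hk_pos]
  linarith

/-- The separator η of a bisection of a finite multiset X of even cardinality
is at least μ̄ − 2d/|X|, where μ̄ is the mean and d is the total deviation below the mean. -/
theorem stmt1 (X : Multiset ℝ) (η : ℝ) (hX : X ≠ 0)
    (heven : Even (Multiset.card X))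
    (hcard : Multiset.card (X.filter (fun x => x ≤ η)) = Multiset.card X / 2)
    (hη : η ≤ X.sum / (Multiset.card X : ℝ)) :
    η ≥ X.sum / (Multiset.card X : ℝ) -
      2 * ((X.filter (fun x => x < X.sum / (Multiset.card X : ℝ))).map
            (fun x => X.sum / (Multiset.card X : ℝ) - x)).sum / (Multiset.card X : ℝ) :=
  stmt1_general X η hX heven hcard
end

section
/- Let p, n : ℕ → ℝ_{≥0} be sequences (positive and negative flow units at a vertex over time) and let ∇ > 0. Suppose: (i) t ↦ min(p(t), n(t)) is nondecreasing, (ii) t ↦ min(p(t) + ∇, n(t)) is nondecreasing. Suppose there are times t₁ ≤ t₂ ≤ t₃ with n(t₁) ≤ p(t₁), p(t₂) + ∇ ≤ n(t₂), and n(t₃) ≤ p(t₃). Then n(t₃) ≥ n(t₁) + ∇. -/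
/-!
Monotonicity of `min (f t) (g t)` means that once `g ≤ f` at time `s`, the value `g s` stays
below `f` forever after. Applied to `pos` and `neg`, and then to `neg` and `pos + ∇`, this gives
`neg t₁ ≤ pos t₂` and `pos t₂ + ∇ ≤ neg t₃`.
-/

section MonotoneMin

variable {α β : Type*} [Preorder α] [LinearOrder β] {f g : α → β} {s t : α}

theorem Monotone.le_of_min_of_le (hm : Monotone fun t => min (f t) (g t)) (hst : s ≤ t)
    (hs : g s ≤ f s) : g s ≤ f t :=
  calc g s = min (f s) (g s) := (min_eq_right hs).symm
    _ ≤ min (f t) (g t) := hm hst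
    _ ≤ f t := min_le_left _ _

theorem Monotone.le_of_min_of_le' (hm : Monotone fun t => min (f t) (g t)) (hst : s ≤ t)
    (hs : f s ≤ g s) : f s ≤ g t :=
  Monotone.le_of_min_of_le (f := g) (g := f) (by simpa only [min_comm] using hm) hst hs

end MonotoneMin

theorem stmt12_general (pos neg : ℕ → ℝ)
    (nabla : ℝ)
    (hmin1 : Monotone (fun t => min (pos t) (neg t)))
    (hmin2 : Monotone (fun t => min (pos t + nabla) (neg t)))
    (t₁ t₂ t₃ : ℕ) (h12 : t₁ ≤ t₂) (h23 : t₂ ≤ t₃)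
    (h1 : neg t₁ ≤ pos t₁) (h2 : pos t₂ + nabla ≤ neg t₂) :
    neg t₃ ≥ neg t₁ + nabla := by
  have h₁₂ : neg t₁ ≤ pos t₂ := hmin1.le_of_min_of_le h12 h1
  have h₂₃ : pos t₂ + nabla ≤ neg t₃ := hmin2.le_of_min_of_le' h23 h2
  linarith

/-- Flip argument for Push-Pull-Relabel: between a state with no negative excess,
a state with negative excess, and again a state with no negative excess, the total
negative units must increase by at least the sink capacity ∇. -/
theorem stmt12 (pos neg : ℕ → ℝ) (hpos : ∀ t, 0 ≤ pos t) (hneg : ∀ t, 0 ≤ neg t)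
    (nabla : ℝ) (hnabla : 0 < nabla)
    (hmin1 : Monotone (fun t => min (pos t) (neg t)))
    (hmin2 : Monotone (fun t => min (pos t + nabla) (neg t)))
    (t₁ t₂ t₃ : ℕ) (h12 : t₁ ≤ t₂) (h23 : t₂ ≤ t₃)
    (h1 : neg t₁ ≤ pos t₁) (h2 : pos t₂ + nabla ≤ neg t₂)
    (h3 : neg t₃ ≤ pos t₃) :
    neg t₃ ≥ neg t₁ + nabla :=
  stmt12_general pos neg nabla hmin1 hmin2 t₁ t₂ t₃ h12 h23 h1 h2
end

section
/- Under the hypotheses of the previous abstraction, if there exist times t₁ ≤ t₂ ≤ ... ≤ t_{2λ−1} alternating between states n(t) ≤ p(t) (odd indices) and p(t) + ∇ ≤ n(t) (even indices), with t ↦ min(p(t),n(t)) and t ↦ min(p(t)+∇, n(t)) nondecreasing, then min(p(t_{2λ−1}), n(t_{2λ−1})) ≥ (λ−1)·∇. -/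
/-!
Each full flip n ≤ p → p + ∇ ≤ n → n ≤ p raises min(p, n) by ∇: at the middle time min(p + ∇, n)
equals p + ∇, which already exceeds the earlier value of min(p, n) by ∇, and at the last time
min(p + ∇, n) ≤ n = min(p, n). Starting from min(p, n) ≥ 0, λ − 1 full flips give (λ − 1)∇.
-/

section Flips

variable {α : Type*} [Preorder α] {pos neg : α → ℝ} {nabla : ℝ}

theorem min_add_le_min_of_flip
    (hmin1 : Monotone (fun t => min (pos t) (neg t)))
    (hmin2 : Monotone (fun t => min (pos t + nabla) (neg t)))
    {s u v : α} (hsu : s ≤ u) (huv : u ≤ v)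
    (hu : pos u + nabla ≤ neg u) (hv : neg v ≤ pos v) :
    min (pos s) (neg s) + nabla ≤ min (pos v) (neg v) :=
  calc min (pos s) (neg s) + nabla
      ≤ min (pos u) (neg u) + nabla := add_le_add_left (hmin1 hsu) _
    _ ≤ pos u + nabla := add_le_add_left (min_le_left _ _) _
    _ = min (pos u + nabla) (neg u) := (min_eq_left hu).symm
    _ ≤ min (pos v + nabla) (neg v) := hmin2 huv
    _ ≤ neg v := min_le_right _ _
    _ = min (pos v) (neg v) := (min_eq_right hv).symm

theorem min_add_mul_le_min_of_alternating
    (hmin1 : Monotone (fun t => min (pos t) (neg t)))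
    (hmin2 : Monotone (fun t => min (pos t + nabla) (neg t)))
    {t : ℕ → α} (hmono : Monotone t) (k : ℕ)
    (halt : ∀ i ≤ 2 * k,
      (Even i → neg (t i) ≤ pos (t i)) ∧ (¬ Even i → pos (t i) + nabla ≤ neg (t i))) :
    min (pos (t 0)) (neg (t 0)) + k * nabla ≤ min (pos (t (2 * k))) (neg (t (2 * k))) := by
  induction k with
  | zero => simp
  | succ k ih =>
    have hodd : pos (t (2 * k + 1)) + nabla ≤ neg (t (2 * k + 1)) :=
      (halt _ (by omega)).2 (by simp)
    have heven : neg (t (2 * (k + 1))) ≤ pos (t (2 * (k + 1))) :=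
      (halt _ le_rfl).1 (even_two_mul _)
    have hflip := min_add_le_min_of_flip hmin1 hmin2 (hmono (Nat.le_succ (2 * k)))
      (hmono (by omega : 2 * k + 1 ≤ 2 * (k + 1))) hodd heven
    calc min (pos (t 0)) (neg (t 0)) + ↑(k + 1) * nabla
        = min (pos (t 0)) (neg (t 0)) + k * nabla + nabla := by push_cast; ring
      _ ≤ min (pos (t (2 * k))) (neg (t (2 * k))) + nabla := by
        gcongr; exact ih fun i hi => halt i (by omega)
      _ ≤ _ := hflip

end Flips

theorem stmt13_general (pos neg : ℕ → ℝ) (hpos : ∀ t, 0 ≤ pos t) (hneg : ∀ t, 0 ≤ neg t)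
    (nabla : ℝ)
    (hmin1 : Monotone (fun t => min (pos t) (neg t)))
    (hmin2 : Monotone (fun t => min (pos t + nabla) (neg t)))
    (lam : ℕ) (hlam : 1 ≤ lam) (t : ℕ → ℕ) (hmono : Monotone t)
    (halt : ∀ i < 2 * lam - 1,
      (Even i → neg (t i) ≤ pos (t i)) ∧ (¬ Even i → pos (t i) + nabla ≤ neg (t i))) :
    min (pos (t (2 * lam - 2))) (neg (t (2 * lam - 2))) ≥ ((lam : ℝ) - 1) * nabla := by
  obtain ⟨k, rfl⟩ : ∃ k, lam = k + 1 := ⟨lam - 1, by omega⟩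
  have hbound := min_add_mul_le_min_of_alternating hmin1 hmin2 hmono k
    fun i hi => halt i (by omega)
  have hstart : 0 ≤ min (pos (t 0)) (neg (t 0)) := le_min (hpos _) (hneg _)
  rw [show 2 * (k + 1) - 2 = 2 * k by omega]
  push_cast
  linarith

/-- Flip-number bound: after 2λ−1 alternations between the states n ≤ p and
p + ∇ ≤ n (along nondecreasing times), min(p, n) at the final time is at least
(λ−1)·∇. -/
theorem stmt13 (pos neg : ℕ → ℝ) (hpos : ∀ t, 0 ≤ pos t) (hneg : ∀ t, 0 ≤ neg t)
    (nabla : ℝ) (hnabla : 0 < nabla)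
    (hmin1 : Monotone (fun t => min (pos t) (neg t)))
    (hmin2 : Monotone (fun t => min (pos t + nabla) (neg t)))
    (lam : ℕ) (hlam : 1 ≤ lam) (t : ℕ → ℕ) (hmono : Monotone t)
    (halt : ∀ i < 2 * lam - 1,
      (Even i → neg (t i) ≤ pos (t i)) ∧ (¬ Even i → pos (t i) + nabla ≤ neg (t i))) :
    min (pos (t (2 * lam - 2))) (neg (t (2 * lam - 2))) ≥ ((lam : ℝ) - 1) * nabla :=
  stmt13_general pos neg hpos hneg nabla hmin1 hmin2 lam hlam t hmono halt
end
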